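/- Certification lemma: let Δ, r ∈ Mat_n(ℝG) with r *-invariant, λ ∈ ℝ, and suppose Δ - λ I_n = S + r where S ∈ Σ²Mat_n(ℝG). Then Δ - (λ - ‖r‖₁) I_n ∈ Σ²Mat_n(ℝG). -/

import Mathlib

/-- The group-ring involution on `ℝG` determined by `g ↦ g⁻¹`. -/
noncomputable def gstar {G : Type*} [Group G] (x : MonoidAlgebra ℝ G) : MonoidAlgebra ℝ G :=
  MonoidAlgebra.ofCoeff (Finsupp.equivMapDomain (Equiv.inv G) x.coeff)

section GroupRingStar
variable {G : Type*} [Group G]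

lemma gstar_single (g : G) (a : ℝ) :
    gstar (MonoidAlgebra.single g a) = MonoidAlgebra.single g⁻¹ a := by
  simp [gstar, Finsupp.equivMapDomain_single]

lemma gstar_add (x y : MonoidAlgebra ℝ G) : gstar (x + y) = gstar x + gstar y :=
  MonoidAlgebra.coeff_injective (map_add (Finsupp.domCongr (M := ℝ) (Equiv.inv G)) x.coeff y.coeff)

lemma gstar_zero : gstar (0 : MonoidAlgebra ℝ G) = 0 := by ext g; simp [gstar]

lemma gstar_gstar (x : MonoidAlgebra ℝ G) : gstar (gstar x) = x := by
  ext g; simp [gstar]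

lemma gstar_mul (x y : MonoidAlgebra ℝ G) : gstar (x * y) = gstar y * gstar x := by
  induction x using MonoidAlgebra.induction_linear with
  | zero => simp [gstar_zero]
  | add f g hf hg => rw [add_mul, gstar_add, hf, hg, gstar_add, mul_add]
  | single g a =>
    induction y using MonoidAlgebra.induction_linear with
    | zero => simp [gstar_zero]
    | add f g' hf hg => rw [mul_add, gstar_add, hf, hg, gstar_add, add_mul]
    | single h b =>
      rw [MonoidAlgebra.single_mul_single, gstar_single, gstar_single, gstar_single,
        MonoidAlgebra.single_mul_single, mul_inv_rev, mul_comm]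

/-- `ℝG` as a `*`-ring, with `star` induced by `g ↦ g⁻¹`. -/
noncomputable instance groupRingStar : StarRing (MonoidAlgebra ℝ G) where
  star := gstar
  star_involutive := gstar_gstar
  star_add := gstar_add
  star_mul := gstar_mul

lemma star_of (g : G) : star (MonoidAlgebra.of ℝ G g) = MonoidAlgebra.of ℝ G g⁻¹ := by
  show gstar _ = _
  simp [MonoidAlgebra.of_apply, gstar_single]

end GroupRingStar

/-- The `ℓ¹`-norm of an element of the group ring `ℝG`. -/
noncomputable def l1Norm {G : Type*} [Group G] (x : MonoidAlgebra ℝ G) : ℝ :=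
  ∑ g ∈ x.coeff.support, |x.coeff g|

/-- The `ℓ¹`-norm of a matrix over the group ring: the sum of the norms of entries. -/
noncomputable def matL1Norm {G : Type*} [Group G] {n : ℕ}
    (M : Matrix (Fin n) (Fin n) (MonoidAlgebra ℝ G)) : ℝ :=
  ∑ i, ∑ j, l1Norm (M i j)

/-- A matrix over `ℝG` is a sum of hermitian squares, i.e. lies in `Σ²Matₙ(ℝG)`. -/
def IsMatSOS {G : Type*} [Group G] {n : ℕ}
    (M : Matrix (Fin n) (Fin n) (MonoidAlgebra ℝ G)) : Prop :=
  ∃ (k : ℕ) (A : Fin k → Matrix (Fin n) (Fin n) (MonoidAlgebra ℝ G)),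
    M = ∑ i, star (A i) * A i

/-! Write `E_ij` for the matrix units. For `u ∈ ℝG` with `u* u = 1` and `X = E_ii + E_ij u`,
`E_ij u + (E_ij u)* + 2 I = X* X + (I - E_ii) + (I - E_jj)`, and `I - E_ii` is a projection, hence a
hermitian square. Applying this with `u = ±g` to each monomial `a g` of each entry `r_ij`, weighted
by `|a|`, and summing over all entries gives `r + r* + 2 ‖r‖₁ I ∈ Σ²`; for `r* = r` this is
`2 (r + ‖r‖₁ I)`. Finally `Δ - (λ - ‖r‖₁) I = S + (r + ‖r‖₁ I)`. -/

namespace Matrix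

lemma star_single {ι R : Type*} [DecidableEq ι] [AddMonoid R] [StarAddMonoid R] (i j : ι) (x : R) :
    star (single i j x) = single j i (star x) :=
  conjTranspose_single i j x

variable {ι R : Type*} [Fintype ι] [DecidableEq ι] [Ring R] [StarRing R]

lemma star_mul_self_single_add_single (i j : ι) (x y : R) :
    star (single i i x + single i j y) * (single i i x + single i j y) =
      single i i (star x * x) + single i j (star x * y) + single j i (star y * x)
        + single j j (star y * y) := by
  simp only [star_add, star_single, add_mul, mul_add, single_mul_single_same]
  abel

lemma isStarProjection_single_one (i : ι) : IsStarProjection (single i i (1 : R)) where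
  isIdempotentElem := by simp [IsIdempotentElem]
  isSelfAdjoint := by simp [IsSelfAdjoint, star_single]

end Matrix

lemma IsStarProjection.star_mul_self {R : Type*} [Mul R] [Star R] {p : R}
    (hp : IsStarProjection p) : star p * p = p := by
  rw [hp.isSelfAdjoint.star_eq, hp.isIdempotentElem.eq]

section GroupRing

variable {G : Type*} [Group G]

noncomputable instance groupRingStarModule : StarModule ℝ (MonoidAlgebra ℝ G) where
  star_smul c x := by
    change gstar (c • x) = c • gstar x
    ext g; simp [gstar]

lemma MonoidAlgebra.star_single (g : G) (a : ℝ) :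
    star (MonoidAlgebra.single g a) = MonoidAlgebra.single g⁻¹ a :=
  gstar_single g a

namespace IsMatSOS

variable {n : ℕ} {M N : Matrix (Fin n) (Fin n) (MonoidAlgebra ℝ G)}

lemma star_mul_self (X : Matrix (Fin n) (Fin n) (MonoidAlgebra ℝ G)) : IsMatSOS (star X * X) :=
  ⟨1, fun _ => X, by simp⟩

lemma zero : IsMatSOS (0 : Matrix (Fin n) (Fin n) (MonoidAlgebra ℝ G)) :=
  ⟨0, finZeroElim, by simp⟩

lemma add (hM : IsMatSOS M) (hN : IsMatSOS N) : IsMatSOS (M + N) := by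
  obtain ⟨k, A, rfl⟩ := hM
  obtain ⟨l, B, rfl⟩ := hN
  exact ⟨k + l, Fin.append A B, by simp [Fin.sum_univ_add]⟩

lemma sum {ι : Type*} {s : Finset ι} {f : ι → Matrix (Fin n) (Fin n) (MonoidAlgebra ℝ G)}
    (hf : ∀ i ∈ s, IsMatSOS (f i)) : IsMatSOS (∑ i ∈ s, f i) :=
  Finset.sum_induction f IsMatSOS (fun _ _ => add) zero hf

lemma smul (hM : IsMatSOS M) {c : ℝ} (hc : 0 ≤ c) : IsMatSOS (c • M) := by
  obtain ⟨k, A, rfl⟩ := hM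
  refine ⟨k, fun i => √c • A i, ?_⟩
  simp only [Finset.smul_sum, star_smul, star_trivial, smul_mul_smul, Real.mul_self_sqrt hc]

lemma of_isStarProjection (hM : IsStarProjection M) : IsMatSOS M :=
  hM.star_mul_self ▸ star_mul_self M

end IsMatSOS

open Matrix in
lemma isMatSOS_single_add_star_add_two_of_star_mul_self {n : ℕ} (i j : Fin n)
    {u : MonoidAlgebra ℝ G} (hu : star u * u = 1) :
    IsMatSOS (single i j u + star (single i j u) + (2 : ℝ) • 1) := by
  have hP := isStarProjection_single_one (R := MonoidAlgebra ℝ G) (ι := Fin n)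
  have key : single i j u + star (single i j u) + (2 : ℝ) • 1 =
      star (single i i 1 + single i j u) * (single i i 1 + single i j u)
        + (1 - single i i 1) + (1 - single j j 1) := by
    rw [star_mul_self_single_add_single, star_single, hu, two_smul]
    simp only [star_one, one_mul, mul_one]
    abel
  rw [key]
  exact ((IsMatSOS.star_mul_self _).add (.of_isStarProjection (hP i).one_sub)).add
    (.of_isStarProjection (hP j).one_sub)

open Matrix in
lemma isMatSOS_single_single_add_star {n : ℕ} (i j : Fin n) (g : G) (a : ℝ) :
    IsMatSOS (single i j (MonoidAlgebra.single g a) + star (single i j (MonoidAlgebra.single g a))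
      + (2 * |a|) • 1) := by
  obtain ⟨ε, hε, ha⟩ : ∃ ε : ℝ, ε * ε = 1 ∧ a = |a| * ε := by
    rcases le_or_gt 0 a with h | h
    · exact ⟨1, by norm_num, by rw [abs_of_nonneg h, mul_one]⟩
    · exact ⟨-1, by norm_num, by rw [abs_of_neg h]; ring⟩
  have hu : star (MonoidAlgebra.single g ε) * MonoidAlgebra.single g ε = 1 := by
    rw [MonoidAlgebra.star_single, MonoidAlgebra.single_mul_single, inv_mul_cancel, hε,
      MonoidAlgebra.one_def]
  have hsingle : single i j (MonoidAlgebra.single g a) =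
      |a| • single i j (MonoidAlgebra.single g ε) := by
    rw [smul_single, MonoidAlgebra.smul_single, smul_eq_mul, ← ha]
  have key : single i j (MonoidAlgebra.single g a) + star (single i j (MonoidAlgebra.single g a))
      + (2 * |a|) • 1 = |a| • (single i j (MonoidAlgebra.single g ε)
        + star (single i j (MonoidAlgebra.single g ε)) + (2 : ℝ) • 1) := by
    rw [hsingle, star_smul, star_trivial, mul_comm, ← smul_smul, ← smul_add, ← smul_add]
  rw [key]
  exact (isMatSOS_single_add_star_add_two_of_star_mul_self i j hu).smul (abs_nonneg a)

open Matrix in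
lemma isMatSOS_single_add_star {n : ℕ} (i j : Fin n) (x : MonoidAlgebra ℝ G) :
    IsMatSOS (single i j x + star (single i j x) + (2 * l1Norm x) • 1) := by
  have key : single i j x + star (single i j x) + (2 * l1Norm x) • 1 =
      ∑ g ∈ x.coeff.support, (single i j (MonoidAlgebra.single g (x.coeff g))
        + star (single i j (MonoidAlgebra.single g (x.coeff g))) + (2 * |x.coeff g|) • 1) := by
    have hx : single i j x =
        ∑ g ∈ x.coeff.support, single i j (MonoidAlgebra.single g (x.coeff g)) := by
      conv_lhs => rw [← MonoidAlgebra.sum_coeff_single x]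
      exact map_sum (singleAddMonoidHom i j) _ _
    rw [hx, star_sum, l1Norm, Finset.mul_sum, Finset.sum_smul, ← Finset.sum_add_distrib,
      ← Finset.sum_add_distrib]
  rw [key]
  exact IsMatSOS.sum fun g _ => isMatSOS_single_single_add_star i j g _

lemma isMatSOS_add_matL1Norm_smul_one {n : ℕ} (r : Matrix (Fin n) (Fin n) (MonoidAlgebra ℝ G))
    (hr : star r = r) : IsMatSOS (r + matL1Norm r • 1) := by
  have key : r + matL1Norm r • 1 = (2⁻¹ : ℝ) • ∑ i, ∑ j,
      (Matrix.single i j (r i j) + star (Matrix.single i j (r i j)) + (2 * l1Norm (r i j)) • 1) := by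
    simp only [Finset.sum_add_distrib, ← star_sum, ← Matrix.matrix_eq_sum_single, hr,
      ← Finset.sum_smul, ← Finset.mul_sum, matL1Norm]
    module
  rw [key]
  exact (IsMatSOS.sum fun i _ => IsMatSOS.sum fun j _ => isMatSOS_single_add_star i j _).smul
    (by norm_num)

end GroupRing

/-- certification lemma: if `Δ - λIₙ = S + r` with `S` a sum of
hermitian squares and `r` `*`-invariant, then `Δ - (λ - ‖r‖₁)Iₙ` is a sum of
hermitian squares. -/
theorem statement18 {G : Type*} [Group G] {n : ℕ}
    (Δ r S : Matrix (Fin n) (Fin n) (MonoidAlgebra ℝ G))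
    (hr : star r = r) (lam : ℝ) (hS : IsMatSOS S)
    (h : Δ - lam • (1 : Matrix (Fin n) (Fin n) (MonoidAlgebra ℝ G)) = S + r) :
    IsMatSOS (Δ - (lam - matL1Norm r) • (1 : Matrix (Fin n) (Fin n) (MonoidAlgebra ℝ G))) := by
  have key : Δ - (lam - matL1Norm r) • (1 : Matrix (Fin n) (Fin n) (MonoidAlgebra ℝ G))
      = S + (r + matL1Norm r • 1) := by
    rw [sub_smul, ← add_assoc, ← h]
    abel
  rw [key]
  exact hS.add (isMatSOS_add_matL1Norm_smul_one r hr)
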